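/- In the symmetric equal-weight two-component unit-variance Gaussian mixture with means t − a and t + a (a > 0), the limiting Viterbi-training mean μ₁(a) = t − a(1−2Φ(−a)) − 2φ(a) satisfies μ₁(a) < t − a for all a > 0; that is, the asymptotic Viterbi-training estimate of the left component mean is strictly biased to the left of the true mean, with bias Δ₁(a) = (t−a) − μ₁(a) = 2φ(a) − 2aΦ(−a) > 0. -/
import Mathlib


open Real Set MeasureTheory

/-- standard normal density -/
noncomputable def stdPhi (x : ℝ) : ℝ := (Real.sqrt (2 * Real.pi))⁻¹ * Real.exp (-x ^ 2 / 2)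

/-- standard normal CDF -/
noncomputable def stdCDF (t : ℝ) : ℝ := ∫ x in Set.Iic t, stdPhi x

lemma stdPhi_pos (x : ℝ) : 0 < stdPhi x := by
  unfold stdPhi
  positivity

lemma stdPhi_eq (x : ℝ) : stdPhi x = (Real.sqrt (2 * Real.pi))⁻¹ * Real.exp (-(1/2) * x ^ 2) := by
  unfold stdPhi; ring_nf

lemma integrable_stdPhi : Integrable stdPhi := by
  simp_rw [funext stdPhi_eq]
  exact (integrable_exp_neg_mul_sq (by norm_num : (0:ℝ) < 1/2)).const_mul _

lemma integrable_neg_mul_stdPhi : Integrable (fun x => -x * stdPhi x) := by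
  have h := ((integrable_mul_exp_neg_mul_sq (by norm_num : (0:ℝ) < 1/2)).const_mul
    ((Real.sqrt (2 * Real.pi))⁻¹)).neg
  refine h.congr (Filter.Eventually.of_forall fun x => ?_)
  simp only [Pi.neg_apply]
  rw [stdPhi_eq]; ring

lemma hasDerivAt_stdPhi (x : ℝ) : HasDerivAt stdPhi (-x * stdPhi x) x := by
  have h1 : HasDerivAt (fun x : ℝ => -x ^ 2 / 2) (-x) x := by
    have := ((hasDerivAt_pow 2 x).neg).div_const 2
    simpa using this.congr_deriv (by ring)
  have h2 := (h1.exp).const_mul ((Real.sqrt (2 * Real.pi))⁻¹)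
  refine h2.congr_deriv ?_
  unfold stdPhi; ring

lemma tendsto_stdPhi_atBot : Filter.Tendsto stdPhi Filter.atBot (nhds 0) := by
  have h : Filter.Tendsto (fun x : ℝ => -x ^ 2 / 2) Filter.atBot Filter.atBot := by
    have h1 : Filter.Tendsto (fun x : ℝ => x ^ 2) Filter.atBot Filter.atTop :=
      (Filter.tendsto_pow_atTop (α := ℝ) (n := 2) (by norm_num)).comp
        Filter.tendsto_abs_atBot_atTop |>.congr (fun x => by simp [Function.comp, sq_abs])
    exact (Filter.tendsto_neg_atTop_atBot.comp h1).atBot_div_const (by norm_num)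
  have h2 := (Real.tendsto_exp_atBot.comp h).const_mul ((Real.sqrt (2 * Real.pi))⁻¹)
  rw [mul_zero] at h2
  simp only [Function.comp] at h2
  unfold stdPhi
  exact h2

lemma key_integral (c : ℝ) : ∫ x in Set.Iic c, -x * stdPhi x = stdPhi c := by
  have := integral_Iic_of_hasDerivAt_of_tendsto' (a := c) (f := stdPhi)
    (f' := fun x => -x * stdPhi x) (fun x _ => hasDerivAt_stdPhi x)
    integrable_neg_mul_stdPhi.integrableOn tendsto_stdPhi_atBot
  simpa using this

lemma mills (a : ℝ) (ha : 0 < a) : a * stdCDF (-a) < stdPhi a := by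
  have hint : IntegrableOn (fun x => a * stdPhi x) (Set.Iic (-a)) :=
    (integrable_stdPhi.const_mul a).integrableOn
  have hint2 : IntegrableOn (fun x => -x * stdPhi x) (Set.Iic (-a)) :=
    integrable_neg_mul_stdPhi.integrableOn
  have hdiff : 0 < ∫ x in Set.Iic (-a), (-x * stdPhi x - a * stdPhi x) := by
    rw [setIntegral_pos_iff_support_of_nonneg_ae]
    · refine lt_of_lt_of_le ?_ (measure_mono (show Set.Iio (-a) ⊆ _ from ?_))
      · simp
      · intro x hx
        have hx' : x < -a := hx
        constructor
        · simp only [Function.mem_support]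
          have h1 : 0 < (-x - a) * stdPhi x := by
            have := stdPhi_pos x
            nlinarith
          intro h; rw [show -x * stdPhi x - a * stdPhi x = (-x - a) * stdPhi x by ring] at h
          linarith
        · exact le_of_lt hx'
    · rw [Filter.EventuallyLE, ae_restrict_iff' measurableSet_Iic]
      filter_upwards with x hx
      simp only [Pi.zero_apply]
      have hx' : x ≤ -a := hx
      have := stdPhi_pos x
      nlinarith
    · exact hint2.sub hint
  have heq : ∫ x in Set.Iic (-a), (-x * stdPhi x - a * stdPhi x)
      = stdPhi (-a) - a * stdCDF (-a) := by
    rw [integral_sub hint2 hint, key_integral, MeasureTheory.integral_const_mul]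
    rfl
  have hev : stdPhi (-a) = stdPhi a := by unfold stdPhi; ring_nf
  rw [heq, hev] at hdiff
  linarith

theorem stmt18 (a t : ℝ) (ha : 0 < a)
    (μ₁ : ℝ) (hμ₁ : μ₁ = t - a * (1 - 2 * stdCDF (-a)) - 2 * stdPhi a) :
    μ₁ < t - a ∧ (t - a) - μ₁ = 2 * stdPhi a - 2 * a * stdCDF (-a) ∧
    0 < 2 * stdPhi a - 2 * a * stdCDF (-a) := by
  have h := mills a ha
  subst hμ₁
  refine ⟨by nlinarith, by ring, by nlinarith⟩
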